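/- Let p_0, p_1, p_2 ∈ [1,∞] with 1/p_0' = 1/p_1 + 1/p_2 − 1 (i.e., the Young functional R(p) = 2 − 1/p_0 − 1/p_1 − 1/p_2 = 0), and let t_0, t_1, t_2 ∈ ℝ satisfy t_j + t_k ≥ 0 for all j ≠ k and t_0 + t_1 + t_2 ≥ 0. Then for f_1 ∈ L^{p_1}_{t_1}(ℝ^d) and f_2 ∈ L^{p_2}_{t_2}(ℝ^d), the convolution f_1 ∗ f_2 belongs to L^{p_0'}_{−t_0}(ℝ^d) and ‖f_1 ∗ f_2‖_{L^{p_0'}_{−t_0}} ≲ ‖f_1‖_{L^{p_1}_{t_1}} ‖f_2‖_{L^{p_2}_{t_2}}. -/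

import Mathlib

/-!
Taking logarithms, the weight `⟨x⟩^{-t₀}` is bounded by
`2^{(|t₀|+|t₁|+|t₂|)/2} ⟨x - y⟩^{t₁} ⟨y⟩^{t₂}` as soon as `t_j + t_k ≥ 0` for `j ≠ k`: at most one
`t_j` is negative, and `log ⟨·⟩²` satisfies the triangle inequality up to `log 2`. This moves the
weights inside the convolution and reduces the claim to Young's inequality
`‖F ⋆ G‖_r ≤ ‖F‖_p ‖G‖_q` for `F = ⟨·⟩^{t₁} |f₁|`, `G = ⟨·⟩^{t₂} |f₂|`.
For `r = ∞` Young's inequality is Hölder's inequality at each point. For `r < ∞`, the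
three-exponent Hölder inequality gives
`(F ⋆ G)(x) ≤ (F^p ⋆ G^q)(x)^{1/r} ‖F‖_p^{1 - p/r} ‖G‖_q^{1 - q/r}`, and by Tonelli `F^p ⋆ G^q`
integrates to `‖F‖_p^p ‖G‖_q^q`.
-/

open MeasureTheory ENNReal
noncomputable section

def wnorm {d : ℕ} (f : EuclideanSpace ℝ (Fin d) → ℂ) (p : ℝ≥0∞) (t : ℝ) : ℝ≥0∞ :=
  eLpNorm (fun x => ((1 + ‖x‖ ^ 2) ^ (t / 2) : ℝ) • f x) p volume

section Holder

variable {α : Type*} [MeasurableSpace α] {μ : Measure α} {f g : α → ℝ≥0∞}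

theorem lintegral_mul_le_essSup_mul_lintegral (hg : AEMeasurable g μ) :
    ∫⁻ a, f a * g a ∂μ ≤ essSup f μ * ∫⁻ a, g a ∂μ := by
  rw [← lintegral_const_mul'' _ hg]
  exact lintegral_mono_ae ((ENNReal.ae_le_essSup f).mono fun a ha => mul_le_mul_left ha _)

theorem lintegral_mul_le_eLpNorm_mul_eLpNorm {p q : ℝ≥0∞} [hpq : p.HolderConjugate q]
    (hf : AEMeasurable f μ) (hg : AEMeasurable g μ) :
    ∫⁻ a, f a * g a ∂μ ≤ eLpNorm f p μ * eLpNorm g q μ := by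
  rcases eq_or_ne p ∞ with rfl | hp
  · obtain rfl : q = 1 := (HolderConjugate.eq_top_iff_eq_one ∞ q).1 rfl
    simpa [eLpNorm_exponent_top, eLpNormEssSup, eLpNorm_one_eq_lintegral_enorm]
      using lintegral_mul_le_essSup_mul_lintegral hg
  rcases eq_or_ne q ∞ with rfl | hq
  · obtain rfl : p = 1 := (HolderConjugate.eq_top_iff_eq_one ∞ p).1 rfl
    simpa [eLpNorm_exponent_top, eLpNormEssSup, eLpNorm_one_eq_lintegral_enorm, mul_comm]
      using lintegral_mul_le_essSup_mul_lintegral (f := g) hf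
  simpa [eLpNorm_eq_lintegral_rpow_enorm_toReal hpq.ne_zero hp,
    eLpNorm_eq_lintegral_rpow_enorm_toReal hpq.symm.ne_zero hq]
    using ENNReal.lintegral_mul_le_Lp_mul_Lq μ (HolderConjugate.toReal_of_ne_top hp hq) hf hg

theorem lintegral_rpow_mul_rpow_mul_rpow_le {h : α → ℝ≥0∞} {a b c : ℝ} (ha : 0 ≤ a) (hb : 0 ≤ b)
    (hc : 0 ≤ c) (habc : a + b + c = 1) (hf : AEMeasurable f μ) (hg : AEMeasurable g μ)
    (hh : AEMeasurable h μ) :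
    ∫⁻ x, f x ^ a * g x ^ b * h x ^ c ∂μ ≤
      (∫⁻ x, f x ∂μ) ^ a * (∫⁻ x, g x ∂μ) ^ b * (∫⁻ x, h x ∂μ) ^ c := by
  have := ENNReal.lintegral_mul_prod_norm_pow_le Finset.univ hf (f := ![g, h])
    (by simp [Fin.forall_fin_two, hg, hh]) a (p := ![b, c]) (by simp [← habc, add_assoc]) ha
    (by simp [Fin.forall_fin_two, hb, hc])
  simpa [Fin.prod_univ_two, mul_assoc] using this

end Holder

theorem one_div_le_one_div_of_one_div_add_one_div_eq {p q r : ℝ} (hq : 1 ≤ q)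
    (hpqr : 1 / p + 1 / q = 1 + 1 / r) : 1 / r ≤ 1 / p := by
  have : 1 / q ≤ 1 := (div_le_one (by linarith)).2 hq
  linarith

theorem young_exponents_finite {p q r : ℝ≥0∞} (hp : 1 ≤ p) (hq : 1 ≤ q)
    (hpqr : 1 / p + 1 / q = 1 + 1 / r) (hr : r ≠ ∞) :
    p ≠ ∞ ∧ q ≠ ∞ ∧ r ≠ 0 ∧ 1 / p.toReal + 1 / q.toReal = 1 + 1 / r.toReal := by
  have hp1 : p⁻¹ ≤ 1 := ENNReal.inv_le_one.2 hp
  have hq1 : q⁻¹ ≤ 1 := ENNReal.inv_le_one.2 hq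
  simp only [one_div] at hpqr ⊢
  have hr' : ¬ r⁻¹ ≤ 0 := by simpa using hr
  have hr0 : r ≠ 0 := by
    rintro rfl
    rw [ENNReal.inv_zero, add_top] at hpqr
    exact (add_le_add hp1 hq1).trans_lt (by norm_num) |>.ne hpqr
  have hp' : p ≠ ∞ := by
    rintro rfl
    rw [ENNReal.inv_top, zero_add] at hpqr
    exact hr' ((ENNReal.add_le_add_iff_left one_ne_top).1 (by simpa [hpqr] using hq1))
  have hq' : q ≠ ∞ := by
    rintro rfl
    rw [ENNReal.inv_top, add_zero] at hpqr
    exact hr' ((ENNReal.add_le_add_iff_left one_ne_top).1 (by simpa [hpqr] using hp1))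
  refine ⟨hp', hq', hr0, ?_⟩
  have := congrArg ENNReal.toReal hpqr
  rwa [ENNReal.toReal_add (by simpa using (zero_lt_one.trans_le hp).ne')
      (by simpa using (zero_lt_one.trans_le hq).ne'),
    ENNReal.toReal_add one_ne_top (by simpa using hr0), ENNReal.toReal_inv, ENNReal.toReal_inv,
    ENNReal.toReal_inv, toReal_one] at this

theorem lconvolution_apply_eq_lintegral_sub {G : Type*} [MeasurableSpace G] [AddCommGroup G]
    (μ : Measure G) (f g : G → ℝ≥0∞) (x : G) :
    (f ⋆ₗ[μ] g) x = ∫⁻ y, f y * g (x - y) ∂μ := by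
  simp [lconvolution_def, neg_add_eq_sub]

theorem lintegral_lconvolution {G : Type*} [MeasurableSpace G] [AddGroup G] [MeasurableAdd₂ G]
    [MeasurableNeg G] {μ : Measure G} [SFinite μ] [μ.IsAddLeftInvariant] {f g : G → ℝ≥0∞}
    (hf : AEMeasurable f μ) (hg : AEMeasurable g μ) :
    ∫⁻ x, (f ⋆ₗ[μ] g) x ∂μ = (∫⁻ x, f x ∂μ) * ∫⁻ x, g x ∂μ := by
  simp only [lconvolution_def]
  rw [lintegral_lintegral_swap (by fun_prop), ← lintegral_mul_const'' _ hf]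
  congr 1 with y
  rw [lintegral_const_mul'' _ ?_, lintegral_add_left_eq_self g (-y)]
  exact hg.comp_quasiMeasurePreserving (measurePreserving_add_left μ (-y)).quasiMeasurePreserving

section Young

variable {G : Type*} [MeasurableSpace G] [AddCommGroup G] [MeasurableAdd₂ G] [MeasurableNeg G]
  {μ : Measure G} [μ.IsAddLeftInvariant] [μ.IsNegInvariant] {f g : G → ℝ≥0∞}

theorem lconvolution_le_eLpNorm_mul_eLpNorm {p q : ℝ≥0∞} [p.HolderConjugate q]
    (hf : AEMeasurable f μ) (hg : AEMeasurable g μ) (x : G) :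
    (f ⋆ₗ[μ] g) x ≤ eLpNorm f p μ * eLpNorm g q μ := by
  have hsub := Measure.measurePreserving_sub_left μ x
  rw [lconvolution_apply_eq_lintegral_sub,
    ← eLpNorm_comp_measurePreserving hg.aestronglyMeasurable hsub]
  exact lintegral_mul_le_eLpNorm_mul_eLpNorm hf
    (hg.comp_quasiMeasurePreserving hsub.quasiMeasurePreserving)

theorem mul_eq_rpow_mul_rpow_mul_rpow {p q r : ℝ} (hp : 0 < p) (hq : 0 < q) (hr : 0 < r)
    (hrp : 1 / r ≤ 1 / p) (hrq : 1 / r ≤ 1 / q) (a b : ℝ≥0∞) :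
    a * b = (a ^ p * b ^ q) ^ (1 / r) * (a ^ p) ^ (1 / p - 1 / r) * (b ^ q) ^ (1 / q - 1 / r) := by
  have split : ∀ (c : ℝ≥0∞) (s : ℝ), 0 < s → 1 / r ≤ 1 / s →
      c = c ^ (s * (1 / r)) * c ^ (s * (1 / s - 1 / r)) := fun c s hs hrs => by
    rw [← ENNReal.rpow_add_of_nonneg _ _ (by positivity) (mul_nonneg hs.le (sub_nonneg.2 hrs)),
      ← mul_add, add_sub_cancel, mul_one_div_cancel hs.ne', ENNReal.rpow_one]
  rw [ENNReal.mul_rpow_of_nonneg _ _ (by positivity), ← ENNReal.rpow_mul, ← ENNReal.rpow_mul,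
    ← ENNReal.rpow_mul, ← ENNReal.rpow_mul]
  conv_lhs => rw [split a p hp hrp, split b q hq hrq]
  ring

theorem lconvolution_apply_le_rpow_mul {p q r : ℝ} (hp : 1 ≤ p) (hq : 1 ≤ q) (hr : 0 < r)
    (hpqr : 1 / p + 1 / q = 1 + 1 / r) (hf : AEMeasurable f μ) (hg : AEMeasurable g μ) (x : G) :
    (f ⋆ₗ[μ] g) x ≤ ((fun y => f y ^ p) ⋆ₗ[μ] fun y => g y ^ q) x ^ (1 / r) *
      ((∫⁻ y, f y ^ p ∂μ) ^ (1 / p - 1 / r) * (∫⁻ y, g y ^ q ∂μ) ^ (1 / q - 1 / r)) := by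
  have hrp := one_div_le_one_div_of_one_div_add_one_div_eq hq hpqr
  have hrq := one_div_le_one_div_of_one_div_add_one_div_eq hp ((add_comm _ _).trans hpqr)
  have hgx : AEMeasurable (fun y => g (x - y)) μ :=
    hg.comp_quasiMeasurePreserving (Measure.measurePreserving_sub_left μ x).quasiMeasurePreserving
  simp only [lconvolution_apply_eq_lintegral_sub]
  calc ∫⁻ y, f y * g (x - y) ∂μ
      = ∫⁻ y, (f y ^ p * g (x - y) ^ q) ^ (1 / r) * (f y ^ p) ^ (1 / p - 1 / r) *
          (g (x - y) ^ q) ^ (1 / q - 1 / r) ∂μ :=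
        lintegral_congr fun y => mul_eq_rpow_mul_rpow_mul_rpow (by linarith) (by linarith) hr
          hrp hrq _ _
    _ ≤ (∫⁻ y, f y ^ p * g (x - y) ^ q ∂μ) ^ (1 / r) * (∫⁻ y, f y ^ p ∂μ) ^ (1 / p - 1 / r) *
          (∫⁻ y, g (x - y) ^ q ∂μ) ^ (1 / q - 1 / r) :=
        lintegral_rpow_mul_rpow_mul_rpow_le (by positivity) (sub_nonneg.2 hrp) (sub_nonneg.2 hrq)
          (by linarith) ((hf.pow_const p).mul (hgx.pow_const q)) (hf.pow_const p) (hgx.pow_const q)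
    _ = _ := by rw [lintegral_sub_left_eq_self (fun z => g z ^ q) x, mul_assoc]

theorem lintegral_lconvolution_rpow_le [SFinite μ] {p q r : ℝ} (hp : 1 ≤ p) (hq : 1 ≤ q)
    (hr : 0 < r) (hpqr : 1 / p + 1 / q = 1 + 1 / r) (hf : AEMeasurable f μ)
    (hg : AEMeasurable g μ) :
    (∫⁻ x, (f ⋆ₗ[μ] g) x ^ r ∂μ) ^ (1 / r) ≤
      (∫⁻ x, f x ^ p ∂μ) ^ (1 / p) * (∫⁻ x, g x ^ q ∂μ) ^ (1 / q) := by
  set A := ∫⁻ x, f x ^ p ∂μ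
  set B := ∫⁻ x, g x ^ q ∂μ
  set K := A ^ (1 / p - 1 / r) * B ^ (1 / q - 1 / r)
  have hfp : AEMeasurable (fun y => f y ^ p) μ := hf.pow_const p
  have hgq : AEMeasurable (fun y => g y ^ q) μ := hg.pow_const q
  have hint : ∫⁻ x, (f ⋆ₗ[μ] g) x ^ r ∂μ ≤ A * B * K ^ r :=
    calc ∫⁻ x, (f ⋆ₗ[μ] g) x ^ r ∂μ
        ≤ ∫⁻ x, ((fun y => f y ^ p) ⋆ₗ[μ] fun y => g y ^ q) x * K ^ r ∂μ := by
          refine lintegral_mono fun x => ?_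
          refine (ENNReal.rpow_le_rpow (lconvolution_apply_le_rpow_mul hp hq hr hpqr hf hg x)
            hr.le).trans_eq ?_
          rw [ENNReal.mul_rpow_of_nonneg _ _ hr.le, ← ENNReal.rpow_mul, one_div_mul_cancel hr.ne',
            ENNReal.rpow_one]
      _ = A * B * K ^ r := by
          rw [lintegral_mul_const'' _ (aemeasurable_lconvolution hfp hgq),
            lintegral_lconvolution hfp hgq]
  have hα := sub_nonneg.2 (one_div_le_one_div_of_one_div_add_one_div_eq hq hpqr)
  have hβ :=
    sub_nonneg.2 (one_div_le_one_div_of_one_div_add_one_div_eq hp ((add_comm _ _).trans hpqr))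
  calc (∫⁻ x, (f ⋆ₗ[μ] g) x ^ r ∂μ) ^ (1 / r) ≤ (A * B * K ^ r) ^ (1 / r) :=
        ENNReal.rpow_le_rpow hint (by positivity)
    _ = (A ^ (1 / r) * A ^ (1 / p - 1 / r)) * (B ^ (1 / r) * B ^ (1 / q - 1 / r)) := by
        rw [ENNReal.mul_rpow_of_nonneg _ _ (by positivity),
          ENNReal.mul_rpow_of_nonneg _ _ (by positivity), ← ENNReal.rpow_mul,
          mul_one_div_cancel hr.ne', ENNReal.rpow_one]
        ring
    _ = A ^ (1 / p) * B ^ (1 / q) := by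
        rw [← ENNReal.rpow_add_of_nonneg _ _ (by positivity) hα,
          ← ENNReal.rpow_add_of_nonneg _ _ (by positivity) hβ, add_sub_cancel, add_sub_cancel]

theorem eLpNorm_lconvolution_le [SFinite μ] {p q r : ℝ≥0∞} (hp : 1 ≤ p) (hq : 1 ≤ q)
    (hpqr : 1 / p + 1 / q = 1 + 1 / r) (hf : AEMeasurable f μ) (hg : AEMeasurable g μ) :
    eLpNorm (f ⋆ₗ[μ] g) r μ ≤ eLpNorm f p μ * eLpNorm g q μ := by
  rcases eq_or_ne r ∞ with rfl | hr
  · have : p.HolderConjugate q := holderConjugate_iff.2 (by simpa using hpqr)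
    rw [eLpNorm_exponent_top]
    exact eLpNormEssSup_le_of_ae_enorm_bound
      (ae_of_all _ fun x => lconvolution_le_eLpNorm_mul_eLpNorm hf hg x)
  obtain ⟨hp', hq', hr0, hpqr'⟩ := young_exponents_finite hp hq hpqr hr
  have hp1 : 1 ≤ p.toReal := by simpa using ENNReal.toReal_mono hp' hp
  have hq1 : 1 ≤ q.toReal := by simpa using ENNReal.toReal_mono hq' hq
  simp only [eLpNorm_eq_lintegral_rpow_enorm_toReal hr0 hr,
    eLpNorm_eq_lintegral_rpow_enorm_toReal (zero_lt_one.trans_le hp).ne' hp',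
    eLpNorm_eq_lintegral_rpow_enorm_toReal (zero_lt_one.trans_le hq).ne' hq', enorm_eq_self]
  exact lintegral_lconvolution_rpow_le hp1 hq1 (ENNReal.toReal_pos hr0 hr) hpqr' hf hg

end Young

theorem neg_mul_le_of_le_add_add {a b c L s₀ s₁ s₂ : ℝ} (ha : 0 ≤ a) (hb : 0 ≤ b) (hc : 0 ≤ c)
    (hL : 0 ≤ L) (habc : a ≤ L + b + c) (hbac : b ≤ L + a + c) (hcab : c ≤ L + a + b)
    (h01 : 0 ≤ s₀ + s₁) (h02 : 0 ≤ s₀ + s₂) (h12 : 0 ≤ s₁ + s₂) :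
    -s₀ * a ≤ (|s₀| + |s₁| + |s₂|) * L + s₁ * b + s₂ * c := by
  rcases lt_or_ge s₀ 0 with hs₀ | hs₀
  · rw [abs_of_neg hs₀, abs_of_pos (by linarith), abs_of_pos (by linarith)]
    nlinarith [mul_le_mul_of_nonneg_left habc (neg_nonneg.2 hs₀.le)]
  rcases lt_or_ge s₁ 0 with hs₁ | hs₁
  · rw [abs_of_neg hs₁, abs_of_nonneg hs₀, abs_of_pos (by linarith)]
    nlinarith [mul_le_mul_of_nonneg_left hbac (neg_nonneg.2 hs₁.le)]
  rcases lt_or_ge s₂ 0 with hs₂ | hs₂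
  · rw [abs_of_neg hs₂, abs_of_nonneg hs₀, abs_of_nonneg hs₁]
    nlinarith [mul_le_mul_of_nonneg_left hcab (neg_nonneg.2 hs₂.le)]
  · rw [abs_of_nonneg hs₀, abs_of_nonneg hs₁, abs_of_nonneg hs₂]
    nlinarith

section JapaneseBracket

variable {E : Type*} [SeminormedAddCommGroup E]

theorem log_one_add_norm_sub_sq_le (u v : E) :
    Real.log (1 + ‖u - v‖ ^ 2) ≤
      Real.log 2 + Real.log (1 + ‖u‖ ^ 2) + Real.log (1 + ‖v‖ ^ 2) := by
  have key : 1 + ‖u - v‖ ^ 2 ≤ 2 * (1 + ‖u‖ ^ 2) * (1 + ‖v‖ ^ 2) := by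
    nlinarith [norm_sub_le u v, norm_nonneg u, norm_nonneg v, norm_nonneg (u - v),
      sq_nonneg (‖u‖ - ‖v‖), sq_nonneg (‖u‖ * ‖v‖)]
  rw [← Real.log_mul (by norm_num) (by positivity), ← Real.log_mul (by positivity) (by positivity)]
  exact Real.log_le_log (by positivity) key

def japaneseBracketRpow (t : ℝ) (x : E) : ℝ :=
  (1 + ‖x‖ ^ 2) ^ (t / 2)

theorem japaneseBracketRpow_pos (t : ℝ) (x : E) : 0 < japaneseBracketRpow t x := by
  unfold japaneseBracketRpow
  positivity

theorem continuous_japaneseBracketRpow (t : ℝ) : Continuous (japaneseBracketRpow t : E → ℝ) :=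
  (continuous_const.add (continuous_norm.pow 2)).rpow_const
    fun x => Or.inl (by positivity : (1 : ℝ) + ‖x‖ ^ 2 ≠ 0)

theorem log_japaneseBracketRpow (t : ℝ) (x : E) :
    Real.log (japaneseBracketRpow t x) = t / 2 * Real.log (1 + ‖x‖ ^ 2) := by
  rw [japaneseBracketRpow, Real.log_rpow (by positivity)]

theorem japaneseBracketRpow_neg_le {t₀ t₁ t₂ : ℝ} (h01 : 0 ≤ t₀ + t₁) (h02 : 0 ≤ t₀ + t₂)
    (h12 : 0 ≤ t₁ + t₂) (x y : E) :
    japaneseBracketRpow (-t₀) x ≤ japaneseBracketRpow t₁ (x - y) *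
      (2 ^ ((|t₀| + |t₁| + |t₂|) / 2) * japaneseBracketRpow t₂ y) := by
  have hpos := japaneseBracketRpow_pos (E := E)
  have hK : (0 : ℝ) < 2 ^ ((|t₀| + |t₁| + |t₂|) / 2) := by positivity
  have hKy := mul_pos hK (hpos t₂ y)
  rw [← Real.log_le_log_iff (hpos _ _) (mul_pos (hpos _ _) hKy),
    Real.log_mul (hpos _ _).ne' hKy.ne', Real.log_mul hK.ne' (hpos _ _).ne', Real.log_rpow two_pos, log_japaneseBracketRpow,
    log_japaneseBracketRpow, log_japaneseBracketRpow]
  set ℓ : E → ℝ := fun z => Real.log (1 + ‖z‖ ^ 2)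
  have hℓ : ∀ z, 0 ≤ ℓ z := fun z => Real.log_nonneg (by nlinarith [norm_nonneg z])
  have hx : ℓ x ≤ Real.log 2 + ℓ (x - y) + ℓ y := by
    simpa [ℓ] using log_one_add_norm_sub_sq_le (x - y) (-y)
  have hy : ℓ y ≤ Real.log 2 + ℓ x + ℓ (x - y) := by
    simpa [ℓ] using log_one_add_norm_sub_sq_le x (x - y)
  have := neg_mul_le_of_le_add_add (hℓ x) (hℓ (x - y)) (hℓ y) (Real.log_nonneg one_le_two) hx
    (log_one_add_norm_sub_sq_le x y) hy h01 h02 h12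
  linarith

end JapaneseBracket

theorem wnorm_eq_eLpNorm_japaneseBracketRpow_smul {d : ℕ} (f : EuclideanSpace ℝ (Fin d) → ℂ)
    (p : ℝ≥0∞) (t : ℝ) :
    wnorm f p t = eLpNorm (fun x => japaneseBracketRpow t x • f x) p volume := rfl

theorem enorm_smul_integral_mul_le {G A : Type*} [MeasurableSpace G] [AddCommGroup G]
    [NormedRing A] [NormedSpace ℝ A] (μ : Measure G) {w₀ w₁ w₂ : G → ℝ}
    (hw : ∀ x y, ‖w₀ x‖ ≤ ‖w₁ (x - y)‖ * ‖w₂ y‖) (f₁ f₂ : G → A) (x : G) :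
    ‖w₀ x • ∫ y, f₁ (x - y) * f₂ y ∂μ‖ₑ ≤
      ((fun y => ‖w₂ y • f₂ y‖ₑ) ⋆ₗ[μ] fun y => ‖w₁ y • f₁ y‖ₑ) x := by
  have hw' : ∀ y, ‖w₀ x‖ₑ ≤ ‖w₁ (x - y)‖ₑ * ‖w₂ y‖ₑ := fun y => by
    rw [← enorm_mul, enorm_le_iff_norm_le, norm_mul]
    exact hw x y
  have hmul : ∀ a b : A, ‖a * b‖ₑ ≤ ‖a‖ₑ * ‖b‖ₑ := fun a b => by
    simpa [enorm_eq_nnnorm] using ENNReal.coe_le_coe.2 (nnnorm_mul_le a b)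
  rw [lconvolution_apply_eq_lintegral_sub, enorm_smul]
  calc ‖w₀ x‖ₑ * ‖∫ y, f₁ (x - y) * f₂ y ∂μ‖ₑ
      ≤ ‖w₀ x‖ₑ * ∫⁻ y, ‖f₁ (x - y) * f₂ y‖ₑ ∂μ := by
        gcongr
        exact enorm_integral_le_lintegral_enorm _
    _ = ∫⁻ y, ‖w₀ x‖ₑ * ‖f₁ (x - y) * f₂ y‖ₑ ∂μ := (lintegral_const_mul' _ _ enorm_ne_top).symm
    _ ≤ ∫⁻ y, ‖w₂ y • f₂ y‖ₑ * ‖w₁ (x - y) • f₁ (x - y)‖ₑ ∂μ := by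
        refine lintegral_mono fun y => ?_
        rw [enorm_smul, enorm_smul]
        calc ‖w₀ x‖ₑ * ‖f₁ (x - y) * f₂ y‖ₑ
            ≤ (‖w₁ (x - y)‖ₑ * ‖w₂ y‖ₑ) * (‖f₁ (x - y)‖ₑ * ‖f₂ y‖ₑ) :=
              mul_le_mul' (hw' y) (hmul _ _)
          _ = _ := by ring

theorem stmt10_general {d : ℕ} (p₀' p₁ p₂ : ℝ≥0∞) (t₀ t₁ t₂ : ℝ)
    (hp₁ : 1 ≤ p₁) (hp₂ : 1 ≤ p₂)
    (hR : 1 / p₁ + 1 / p₂ = 1 + 1 / p₀')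
    (ht01 : 0 ≤ t₀ + t₁) (ht02 : 0 ≤ t₀ + t₂) (ht12 : 0 ≤ t₁ + t₂) :
    ∃ C : ℝ≥0∞, 0 < C ∧ C < ⊤ ∧
      ∀ f₁ f₂ : EuclideanSpace ℝ (Fin d) → ℂ,
        AEStronglyMeasurable f₁ volume → AEStronglyMeasurable f₂ volume →
        wnorm f₁ p₁ t₁ < ⊤ → wnorm f₂ p₂ t₂ < ⊤ →
        wnorm (fun x => ∫ y, f₁ (x - y) * f₂ y) p₀' (-t₀) ≤ C * (wnorm f₁ p₁ t₁ * wnorm f₂ p₂ t₂) := by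
  set K : ℝ := 2 ^ ((|t₀| + |t₁| + |t₂|) / 2)
  have hK : 0 < K := by positivity
  refine ⟨‖K‖ₑ, enorm_pos.2 hK.ne', enorm_lt_top, fun f₁ f₂ hf₁ hf₂ _ _ => ?_⟩
  have hweight : ∀ x y : EuclideanSpace ℝ (Fin d), ‖japaneseBracketRpow (-t₀) x‖ ≤
      ‖japaneseBracketRpow t₁ (x - y)‖ * ‖K * japaneseBracketRpow t₂ y‖ := fun x y => by
    simpa only [Real.norm_of_nonneg (japaneseBracketRpow_pos _ _).le,
      Real.norm_of_nonneg (mul_pos hK (japaneseBracketRpow_pos _ _)).le]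
      using japaneseBracketRpow_neg_le ht01 ht02 ht12 x y
  calc wnorm (fun x => ∫ y, f₁ (x - y) * f₂ y) p₀' (-t₀)
      ≤ eLpNorm ((fun y => ‖(K * japaneseBracketRpow t₂ y) • f₂ y‖ₑ) ⋆ₗ
          fun y => ‖japaneseBracketRpow t₁ y • f₁ y‖ₑ) p₀' volume :=
        eLpNorm_mono_enorm fun x => enorm_smul_integral_mul_le volume hweight f₁ f₂ x
    _ ≤ eLpNorm (fun y => ‖(K * japaneseBracketRpow t₂ y) • f₂ y‖ₑ) p₂ volume *
          eLpNorm (fun y => ‖japaneseBracketRpow t₁ y • f₁ y‖ₑ) p₁ volume :=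
        eLpNorm_lconvolution_le hp₂ hp₁ (by rwa [add_comm])
          ((continuous_const.mul (continuous_japaneseBracketRpow t₂)).aestronglyMeasurable.smul
            hf₂).enorm
          ((continuous_japaneseBracketRpow t₁).aestronglyMeasurable.smul hf₁).enorm
    _ = ‖K‖ₑ * (wnorm f₁ p₁ t₁ * wnorm f₂ p₂ t₂) := by
        simp only [eLpNorm_enorm, mul_smul, wnorm_eq_eLpNorm_japaneseBracketRpow_smul]
        rw [show (fun y => K • japaneseBracketRpow t₂ y • f₂ y) =
          K • fun y => japaneseBracketRpow t₂ y • f₂ y from rfl, eLpNorm_const_smul]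
        ring

theorem stmt10 {d : ℕ} (p₀ p₀' p₁ p₂ : ℝ≥0∞) (t₀ t₁ t₂ : ℝ)
    (hp₀ : 1 ≤ p₀) (hp₁ : 1 ≤ p₁) (hp₂ : 1 ≤ p₂)
    (hconj : 1 / p₀ + 1 / p₀' = 1)
    (hR : 1 / p₁ + 1 / p₂ = 1 + 1 / p₀')
    (ht01 : 0 ≤ t₀ + t₁) (ht02 : 0 ≤ t₀ + t₂) (ht12 : 0 ≤ t₁ + t₂)
    (ht : 0 ≤ t₀ + t₁ + t₂) :
    ∃ C : ℝ≥0∞, 0 < C ∧ C < ⊤ ∧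
      ∀ f₁ f₂ : EuclideanSpace ℝ (Fin d) → ℂ,
        AEStronglyMeasurable f₁ volume → AEStronglyMeasurable f₂ volume →
        wnorm f₁ p₁ t₁ < ⊤ → wnorm f₂ p₂ t₂ < ⊤ →
        wnorm (fun x => ∫ y, f₁ (x - y) * f₂ y) p₀' (-t₀) ≤ C * (wnorm f₁ p₁ t₁ * wnorm f₂ p₂ t₂) :=
  stmt10_general p₀' p₁ p₂ t₀ t₁ t₂ hp₁ hp₂ hR ht01 ht02 ht12
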